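/- Let d ≥ 1 be an integer, p ∈ (d, ∞) and q ∈ (2, ∞) real numbers with d/p + 2/q = 1, T ∈ (0, ∞), and b ∈ L^q([0, T]; L^p(ℝ^d)). Then for every α > 0 there exist Borel measurable functions b_M and b_B on [0, T] × ℝ^d with b = b_M + b_B such that: (i) for every t ∈ [0, T] and every ball B ⊂ ℝ^d of radius ρ, (Vol(B)^{−1} ∫_B |b_M(t, x)|^d dx)^{1/d} ≤ α ρ^{−1}; and (ii) there is a function λ ∈ L^2([0, T]) with |b_B(t, x)| ≤ λ(t) for all (t, x) ∈ [0, T] × ℝ^d. -/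

import Mathlib

open MeasureTheory Set Metric Module

/-! On `{|b| ≥ λ}` one has `|b|^d ≤ λ^(d-p) |b|^p`, so `∫_B |b_M(t)|^d ≤ λ(t)^(d-p) ‖b(t)‖_p^p`.
Choosing `λ(t) = (‖b(t)‖_p^p / K)^(1/(p-d))` with `K = α^d |B_1|` makes the right side equal to
`K`, and dividing by `|B| = ρ^d |B_1|` gives the Morrey bound `α/ρ`. The criticality relation
`d/p + 2/q = 1` says exactly that `2/(p-d) = q/p`, so `λ(t)^2 = (‖b(t)‖_p^p / K)^(q/p)` is
integrable in time, while `|b_B| < λ` by construction. -/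

theorem Real.rpow_le_rpow_sub_mul_rpow {x lam d p : ℝ} (hlam : 0 < lam) (hx : lam ≤ x)
    (hdp : d ≤ p) : x ^ d ≤ lam ^ (d - p) * x ^ p := by
  have hx0 : 0 < x := hlam.trans_le hx
  calc x ^ d = x ^ (d - p) * x ^ p := by rw [← Real.rpow_add hx0, sub_add_cancel]
    _ ≤ lam ^ (d - p) * x ^ p := by
      gcongr ?_ * _
      exact Real.rpow_le_rpow_of_nonpos hlam hx (by linarith)

theorem abs_indicator_rpow_le {α : Type*} {f : α → ℝ} {d p lam : ℝ} (hlam : 0 < lam)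
    (hd : 0 < d) (hdp : d ≤ p) (x : α) :
    |{y | lam ≤ |f y|}.indicator f x| ^ d ≤ lam ^ (d - p) * |f x| ^ p := by
  by_cases hx : lam ≤ |f x|
  · rw [indicator_of_mem (show x ∈ {y | lam ≤ |f y|} from hx)]
    exact Real.rpow_le_rpow_sub_mul_rpow hlam hx hdp
  · rw [indicator_of_notMem (show x ∉ {y | lam ≤ |f y|} from hx), abs_zero,
      Real.zero_rpow hd.ne']
    positivity

theorem abs_indicator_compl_le {α : Type*} {f : α → ℝ} {lam : ℝ} (hlam : 0 ≤ lam) (x : α) :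
    |{y | lam ≤ |f y|}ᶜ.indicator f x| ≤ lam := by
  by_cases hx : lam ≤ |f x|
  · rw [indicator_of_notMem (by simpa using hx), abs_zero]
    exact hlam
  · rw [indicator_of_mem (show x ∈ {y | lam ≤ |f y|}ᶜ from hx)]
    exact (not_le.mp hx).le

section Truncation

variable {α : Type*} [MeasurableSpace α] {μ : Measure α} {f : α → ℝ} {d p lam : ℝ}

theorem setIntegral_abs_indicator_rpow_le (hf : Measurable f)
    (hfp : Integrable (fun x => |f x| ^ p) μ) (hlam : 0 < lam) (hd : 0 < d) (hdp : d ≤ p)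
    (s : Set α) :
    ∫ x in s, |{y | lam ≤ |f y|}.indicator f x| ^ d ∂μ ≤ lam ^ (d - p) * ∫ x, |f x| ^ p ∂μ := by
  have hbound := abs_indicator_rpow_le (f := f) hlam hd hdp
  have hdom : Integrable (fun x => lam ^ (d - p) * |f x| ^ p) μ := hfp.const_mul _
  have hint : Integrable (fun x => |{y | lam ≤ |f y|}.indicator f x| ^ d) μ := by
    refine hdom.mono' ?_ (.of_forall fun x => ?_)
    · exact ((hf.indicator (measurableSet_le measurable_const hf.abs)).abs.pow_const
        d).aestronglyMeasurable
    · rw [Real.norm_of_nonneg (by positivity)]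
      exact hbound x
  calc ∫ x in s, |{y | lam ≤ |f y|}.indicator f x| ^ d ∂μ
      ≤ ∫ x, |{y | lam ≤ |f y|}.indicator f x| ^ d ∂μ :=
        setIntegral_le_integral hint (.of_forall fun x => by positivity)
    _ ≤ ∫ x, lam ^ (d - p) * |f x| ^ p ∂μ := integral_mono hint hdom hbound
    _ = lam ^ (d - p) * ∫ x, |f x| ^ p ∂μ := integral_const_mul _ _

theorem setIntegral_abs_indicator_rpow_le_at_threshold {K : ℝ} (hf : Measurable f)
    (hfp : Integrable (fun x => |f x| ^ p) μ) (hK : 0 < K) (hd : 0 < d) (hdp : d < p)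
    (s : Set α) :
    ∫ x in s, |{y | ((∫ x, |f x| ^ p ∂μ) / K) ^ (p - d)⁻¹ ≤ |f y|}.indicator f x| ^ d ∂μ
      ≤ K := by
  set I := ∫ x, |f x| ^ p ∂μ
  -- if `‖f‖_p = 0` the threshold degenerates to `0`, but then `f = 0` a.e.
  rcases (integral_nonneg fun x => by positivity : 0 ≤ I).eq_or_lt with hI | hI
  · have hf0 : f =ᵐ[μ] 0 := by
      filter_upwards [(integral_eq_zero_iff_of_nonneg (fun x => by positivity) hfp).mp hI.symm]
        with x hx
      rwa [Pi.zero_apply, Real.rpow_eq_zero (abs_nonneg _) (hd.trans hdp).ne', abs_eq_zero] at hx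
    rw [setIntegral_eq_zero_of_ae_eq_zero]
    · exact hK.le
    filter_upwards [hf0] with x hx _
    rw [Pi.zero_apply] at hx
    simp [indicator_apply, hx, Real.zero_rpow hd.ne']
  · have hlevel : ((I / K) ^ (p - d)⁻¹) ^ (d - p) = K / I := by
      rw [← Real.rpow_mul (by positivity), inv_mul_eq_div, ← neg_sub p d,
        neg_div, div_self (by linarith), Real.rpow_neg_one, inv_div]
    calc _ ≤ ((I / K) ^ (p - d)⁻¹) ^ (d - p) * I :=
          setIntegral_abs_indicator_rpow_le hf hfp (by positivity) hd hdp.le s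
      _ = K := by rw [hlevel, div_mul_cancel₀ _ hI.ne']

end Truncation

theorem average_ball_rpow_inv_le {E : Type*} [NormedAddCommGroup E] [NormedSpace ℝ E]
    [FiniteDimensional ℝ E] [MeasurableSpace E] [BorelSpace E] (μ : Measure E)
    [μ.IsAddHaarMeasure] {n : ℕ} (hn : finrank ℝ E = n) (hn0 : 0 < n) {a ρ J : ℝ} (ha : 0 ≤ a)
    (hρ : 0 < ρ) (hJ0 : 0 ≤ J) (hJ : J ≤ a ^ n * μ.real (ball 0 1)) (z : E) :
    ((μ.real (ball z ρ))⁻¹ * J) ^ ((n : ℝ)⁻¹) ≤ a * ρ⁻¹ := by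
  have hc : 0 < μ.real (ball (0 : E) 1) :=
    ENNReal.toReal_pos (measure_ball_pos μ 0 one_pos).ne' measure_ball_lt_top.ne
  have hvol : μ.real (ball z ρ) = ρ ^ n * μ.real (ball 0 1) := by
    rw [measureReal_def, Measure.addHaar_ball_of_pos μ z hρ, hn, ENNReal.toReal_mul,
      ENNReal.toReal_ofReal (by positivity), measureReal_def]
  have hmean : (μ.real (ball z ρ))⁻¹ * J ≤ (a * ρ⁻¹) ^ n :=
    calc (μ.real (ball z ρ))⁻¹ * J
        ≤ (ρ ^ n * μ.real (ball 0 1))⁻¹ * (a ^ n * μ.real (ball 0 1)) := by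
          rw [hvol]; gcongr
      _ = (a * ρ⁻¹) ^ n := by rw [mul_pow, inv_pow]; field_simp
  calc ((μ.real (ball z ρ))⁻¹ * J) ^ ((n : ℝ)⁻¹) ≤ ((a * ρ⁻¹) ^ n) ^ ((n : ℝ)⁻¹) := by
        gcongr
    _ = a * ρ⁻¹ := Real.pow_rpow_inv_natCast (by positivity) hn0.ne'

theorem div_eq_two_div_sub_of_div_add_two_div_eq_one {d p q : ℝ} (hp : p ≠ 0) (hq : q ≠ 0)
    (hdp : d ≠ p) (hcrit : d / p + 2 / q = 1) : q / p = 2 / (p - d) := by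
  rw [div_eq_div_iff hp (sub_ne_zero.mpr hdp.symm)]
  field_simp at hcrit
  linarith

theorem critical_drift_decomposition_general (d : ℕ) (hd : 1 ≤ d) (p q T : ℝ)
    (hp : (d : ℝ) < p) (hq : 2 < q) (hcrit : (d : ℝ) / p + 2 / q = 1)
    (b : ℝ → EuclideanSpace ℝ (Fin d) → ℝ)
    (hmeas : Measurable (Function.uncurry b))
    (hLp : ∀ t ∈ Set.Icc (0 : ℝ) T, Integrable (fun x => |b t x| ^ p))
    (hLq : IntegrableOn (fun t => (∫ x, |b t x| ^ p) ^ (q / p)) (Set.Icc 0 T)) :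
    ∀ α > (0 : ℝ), ∃ bM bB : ℝ → EuclideanSpace ℝ (Fin d) → ℝ,
      Measurable (Function.uncurry bM) ∧ Measurable (Function.uncurry bB) ∧
      (∀ t x, b t x = bM t x + bB t x) ∧
      (∀ t ∈ Set.Icc (0 : ℝ) T, ∀ (z : EuclideanSpace ℝ (Fin d)) (ρ : ℝ), 0 < ρ →
        ((volume (Metric.ball z ρ)).toReal⁻¹ *
            ∫ x in Metric.ball z ρ, |bM t x| ^ (d : ℝ)) ^ ((d : ℝ)⁻¹) ≤ α * ρ⁻¹) ∧
      (∃ lam : ℝ → ℝ, Measurable lam ∧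
        IntegrableOn (fun t => lam t ^ 2) (Set.Icc 0 T) ∧
        ∀ t ∈ Set.Icc (0 : ℝ) T, ∀ x, |bB t x| ≤ lam t) := by
  intro α hα
  have hd0 : (0 : ℝ) < d := by exact_mod_cast hd
  set K := α ^ d * volume.real (ball (0 : EuclideanSpace ℝ (Fin d)) 1)
  have hK : 0 < K := mul_pos (by positivity) <|
    ENNReal.toReal_pos (measure_ball_pos _ _ one_pos).ne' measure_ball_lt_top.ne
  have hI : Measurable fun t => ∫ x, |b t x| ^ p :=
    (hmeas.abs.pow_const p).stronglyMeasurable.integral_prod_right'.measurable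
  set lam : ℝ → ℝ := fun t => ((∫ x, |b t x| ^ p) / K) ^ (p - d)⁻¹
  have hlam : Measurable lam := (hI.div_const K).pow_const _
  have hlarge : MeasurableSet {z : ℝ × EuclideanSpace ℝ (Fin d) | lam z.1 ≤ |b z.1 z.2|} :=
    measurableSet_le (hlam.comp measurable_fst) hmeas.abs
  refine ⟨fun t => {x | lam t ≤ |b t x|}.indicator (b t),
    fun t => {x | lam t ≤ |b t x|}ᶜ.indicator (b t), hmeas.indicator hlarge,
    hmeas.indicator hlarge.compl, fun t x => (indicator_self_add_compl_apply _ _ _).symm, ?_,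
    lam, hlam, ?_, fun t _ x => abs_indicator_compl_le (by positivity) x⟩
  · intro t ht z ρ hρ
    exact average_ball_rpow_inv_le volume finrank_euclideanSpace_fin (by omega) hα.le hρ
      (integral_nonneg fun x => by positivity)
      (setIntegral_abs_indicator_rpow_le_at_threshold hmeas.of_uncurry_left (hLp t ht) hK
        hd0 hp _) z
  · have hexp := div_eq_two_div_sub_of_div_add_two_div_eq_one (by linarith) (by linarith)
      hp.ne hcrit
    have hsq : ∀ t, lam t ^ 2 = (∫ x, |b t x| ^ p) ^ (q / p) / K ^ (q / p) := fun t => by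
      have hJ : 0 ≤ ∫ x, |b t x| ^ p := integral_nonneg fun x => by positivity
      rw [← Real.div_rpow hJ hK.le, hexp, ← Real.rpow_mul_natCast (by positivity)]
      congr 1
      push_cast
      ring
    simp only [hsq]
    exact hLq.div_const _

/-- Conclusion of Remark 4 (case `p > d`): any `b ∈ L^q([0,T]; L^p(ℝ^d))` with
`d/p + 2/q = 1`, `p ∈ (d,∞)`, `q ∈ (2,∞)`, decomposes, for every `α > 0`, as
`b = b_M + b_B` where `b_M` satisfies the Morrey bound
`(Vol(B)⁻¹ ∫_B |b_M(t,·)|^d)^{1/d} ≤ α ρ⁻¹` on every ball of radius `ρ`, and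
`|b_B(t,x)| ≤ λ(t)` for some `λ ∈ L²([0,T])`. -/
theorem critical_drift_decomposition (d : ℕ) (hd : 1 ≤ d) (p q T : ℝ)
    (hp : (d : ℝ) < p) (hq : 2 < q) (hcrit : (d : ℝ) / p + 2 / q = 1) (hT : 0 < T)
    (b : ℝ → EuclideanSpace ℝ (Fin d) → ℝ)
    (hmeas : Measurable (Function.uncurry b))
    (hLp : ∀ t ∈ Set.Icc (0 : ℝ) T, Integrable (fun x => |b t x| ^ p))
    (hLq : IntegrableOn (fun t => (∫ x, |b t x| ^ p) ^ (q / p)) (Set.Icc 0 T)) :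
    ∀ α > (0 : ℝ), ∃ bM bB : ℝ → EuclideanSpace ℝ (Fin d) → ℝ,
      Measurable (Function.uncurry bM) ∧ Measurable (Function.uncurry bB) ∧
      (∀ t x, b t x = bM t x + bB t x) ∧
      (∀ t ∈ Set.Icc (0 : ℝ) T, ∀ (z : EuclideanSpace ℝ (Fin d)) (ρ : ℝ), 0 < ρ →
        ((volume (Metric.ball z ρ)).toReal⁻¹ *
            ∫ x in Metric.ball z ρ, |bM t x| ^ (d : ℝ)) ^ ((d : ℝ)⁻¹) ≤ α * ρ⁻¹) ∧
      (∃ lam : ℝ → ℝ, Measurable lam ∧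
        IntegrableOn (fun t => lam t ^ 2) (Set.Icc 0 T) ∧
        ∀ t ∈ Set.Icc (0 : ℝ) T, ∀ x, |bB t x| ≤ lam t) :=
  critical_drift_decomposition_general d hd p q T hp hq hcrit b hmeas hLp hLq
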